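/- arXiv:2308.03626 — 4 statements merged into one kernel-verified Lean document; each statement's English description precedes it below -/
import Mathlib

section
/- The one-step relation on prefix expressions is deterministic: for any prefix expression α over alphabet Σ, any m-map M, any letter a ∈ Σ, and any position p ∈ ℕ, there is at most one pair (α', M') such that (α, M) →_{a,p} (α', M'), i.e., at most one of the defining rules applies. -/
open Classical

/-- The alphabet of m-strings: pairs over ℕ ∪ {⊥}, with `none` standing for ⊥. -/
abbrev MLetter := Option ℕ × Option ℕ

/-- M-strings: words over `MLetter`. -/
abbrev MStr := List MLetter

/-- Partial concatenation `⊙ : M* × M ⇀ M*` of an m-string with a letter. -/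
def mconc1 (α : MStr) (x : MLetter) : Option MStr :=
  match α.getLast?, x with
  | none, (c, d) => if c = none then none else some [(c, d)]
  | some (a, b), (c, d) =>
    if b ≠ none then some (α ++ [(c, d)])
    else if c = none then some (α.dropLast ++ [(a, d)])
    else some (α.dropLast ++ [(c, d)])

/-- Extension of `⊙` to m-strings on the right. -/
def mconcW (α : MStr) (w : MStr) : Option MStr :=
  w.foldlM mconc1 α

/-- M-maps: partial functions from labels to m-strings. -/
def MMap (L : Type*) := L → Option MStr

/-- The empty m-map. -/
def mEmpty {L : Type*} : MMap L := fun _ => none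

/-- Concatenation `⧒` of m-maps (pointwise on the union of domains, undefined
values treated as ε; `none` outside the union of domains or when `⊙` is undefined). -/
noncomputable def mmapConc {L : Type*} (m₁ m₂ : MMap L) : MMap L := fun l =>
  if m₁ l = none ∧ m₂ l = none then none
  else mconcW ((m₁ l).getD []) ((m₂ l).getD [])

/-- The singleton m-map `{l ↦ x}`. -/
noncomputable def mSingle {L : Type*} (l : L) (x : MLetter) : MMap L := fun l' =>
  if l' = l then some [x] else none

/-- Prefix expressions over alphabet `A` and labels `L`, extended with
`⊥` (failed match) and ongoing labelled matches `[α]ₗᵐ`. -/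
inductive PE (A L : Type*) where
  | eps
  | bot
  | ltr (a : A)
  | cat (α β : PE A L)
  | or (α β : PE A L)
  | iter (α β : PE A L)
  | lab (l : L) (α : PE A L)
  | labm (l : L) (α : PE A L)

/-- The predicate `ε ∈ α`. -/
def PE.nullable {A L : Type*} : PE A L → Prop
  | .eps => True
  | .or α β => α.nullable ∨ β.nullable
  | .lab _ (.or α β) => PE.nullable α ∨ PE.nullable β
  | .labm _ (.or α β) => PE.nullable α ∨ PE.nullable β
  | _ => False

/-- Concatenation smart constructor realizing the identifications
`ε·α = α·ε = α` (and `⊥·α = ⊥`) modulo which the rules are evaluated. -/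
noncomputable def PE.scat {A L : Type*} (α β : PE A L) : PE A L :=
  if α = .eps then β else if β = .eps then α else if α = .bot then .bot else .cat α β

/-- Disjunction reduced w.r.t. `α + ⊥ = ⊥ + α = α`. -/
noncomputable def PE.sor {A L : Type*} (α β : PE A L) : PE A L :=
  if α = .bot then β else if β = .bot then α else .or α β

/-- The β-subgrammar `β ::= a | β + β | [β]ₗ`. -/
inductive PE.isBeta {A L : Type*} : PE A L → Prop
  | ltr (a : A) : (PE.ltr (L := L) a).isBeta
  | or {α β : PE A L} : α.isBeta → β.isBeta → (PE.or α β).isBeta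
  | lab {l : L} {α : PE A L} : α.isBeta → (PE.lab l α).isBeta

/-- The one-step relation `→_{a,p}` on pairs of a prefix expression and an m-map. -/
inductive Step {A L : Type*} (a : A) (p : ℕ) :
    PE A L × MMap L → PE A L × MMap L → Prop where
  | eps (M : MMap L) : Step a p (.eps, M) (.bot, mEmpty)
  | bot (M : MMap L) : Step a p (.bot, M) (.bot, mEmpty)
  | ltr (M : MMap L) : Step a p (.ltr a, M) (.eps, M)
  | ltrFail (b : A) (M : MMap L) (hb : b ≠ a) : Step a p (.ltr b, M) (.bot, mEmpty)
  | concat {α β α' : PE A L} {M M' : MMap L} (h : Step a p (α, M) (α', M'))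
      (h1 : α' ≠ .bot) (h2 : ¬ α'.nullable) :
      Step a p (.cat α β, M) (.scat α' β, M')
  | concatEps {α β α' : PE A L} {M M' : MMap L} (h : Step a p (α, M) (α', M'))
      (h2 : α'.nullable) : Step a p (.cat α β, M) (β, M')
  | concatBot {α β : PE A L} {M M' : MMap L} (h : Step a p (α, M) (.bot, M')) :
      Step a p (.cat α β, M) (.bot, mEmpty)
  | orEnd {α₀ α₁ α₀' α₁' : PE A L} {M M₀' M₁' : MMap L}
      (h₀ : Step a p (α₀, M) (α₀', M₀')) (h₁ : Step a p (α₁, M) (α₁', M₁'))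
      (h : α₀'.nullable ∨ α₁'.nullable) :
      Step a p (.or α₀ α₁, M) (.eps, mmapConc M₀' M₁')
  | or {α₀ α₁ α₀' α₁' : PE A L} {M M₀' M₁' : MMap L}
      (h₀ : Step a p (α₀, M) (α₀', M₀')) (h₁ : Step a p (α₁, M) (α₁', M₁'))
      (h : ¬ α₀'.nullable ∧ ¬ α₁'.nullable) :
      Step a p (.or α₀ α₁, M) (.sor α₀' α₁', mmapConc M₀' M₁')
  | iterEnd {α β β' : PE A L} {M M' : MMap L} (h : Step a p (β, M) (β', M'))
      (hn : β'.nullable) : Step a p (.iter α β, M) (.eps, M')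
  | iter {α β β' α' : PE A L} {M Mb M' : MMap L} (hb : Step a p (β, M) (β', Mb))
      (hn : ¬ β'.nullable) (h : Step a p (α, M) (α', M')) :
      Step a p (.iter α β, M) (.scat α' (.iter α β), M')
  | labStart {l : L} {α α' : PE A L} {M M' : MMap L} (h : Step a p (α, M) (α', M'))
      (hn : ¬ α'.nullable) :
      Step a p (.lab l α, M) (.labm l α', mmapConc (mSingle l (some p, none)) M')
  | labCont {l : L} {α α' : PE A L} {M M' : MMap L} (h : Step a p (α, M) (α', M'))
      (hn : ¬ α'.nullable) : Step a p (.labm l α, M) (.labm l α', M')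
  | labLtr {l : L} {α α' : PE A L} {M M' : MMap L} (h : Step a p (α, M) (α', M'))
      (hn : α'.nullable) :
      Step a p (.lab l α, M) (.eps, mmapConc M' (mSingle l (some p, some p)))
  | labEnd {l : L} {α α' : PE A L} {M M' : MMap L} (h : Step a p (α, M) (α', M'))
      (hn : α'.nullable) :
      Step a p (.labm l α, M) (.eps, mmapConc M' (mSingle l (none, some p)))

/-- The evaluation function `δ̄` as a relation: `Evalbar α w p M r` means
`δ̄(α, w, p, M) = r`; `δ(α, w) = r` is `Evalbar α w 0 mEmpty r`. -/
inductive Evalbar {A L : Type*} :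
    PE A L → List A → ℕ → MMap L → PE A L × MMap L → Prop where
  | nil (α : PE A L) (p : ℕ) (M : MMap L) : Evalbar α [] p M (α, M)
  | cons {α α' : PE A L} {a : A} {w : List A} {p : ℕ} {M M' : MMap L}
      {r : PE A L × MMap L} (h : Step a p (α, M) (α', M'))
      (ht : Evalbar α' w (p + 1) M' r) : Evalbar α (a :: w) p M r

/-- One expression rewriting step (expression components) at position `p`. -/
def StepE {A L : Type*} (p : ℕ) (α α' : PE A L) : Prop :=
  ∃ (a : A) (M M' : MMap L), Step a p (α, M) (α', M')

/-- Reachability by finitely many one-step rewritings at fixed position `p`;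
`D_p(α) = {α' | Reach p α α'}`. -/
def Reach {A L : Type*} (p : ℕ) : PE A L → PE A L → Prop :=
  Relation.ReflTransGen (StepE p)

/-- Iteration-free prefix expressions. -/
def PE.iterFree {A L : Type*} : PE A L → Prop
  | .cat α β => α.iterFree ∧ β.iterFree
  | .or α β => α.iterFree ∧ β.iterFree
  | .iter _ _ => False
  | .lab _ α => α.iterFree
  | .labm _ α => α.iterFree
  | _ => True

/-- Size of a prefix expression (number of symbols, counting labels). -/
def PE.size {A L : Type*} : PE A L → ℕ
  | .eps => 1
  | .bot => 1
  | .ltr _ => 1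
  | .cat α β => α.size + β.size + 1
  | .or α β => α.size + β.size + 1
  | .iter α β => α.size + β.size + 1
  | .lab _ α => α.size + 2
  | .labm _ α => α.size + 2

/-- the one-step relation `→_{a,p}` is deterministic. -/
theorem step_deterministic {A L : Type*} (a : A) (p : ℕ) (α : PE A L) (M : MMap L)
    (o₁ o₂ : PE A L × MMap L) (h₁ : Step a p (α, M) o₁) (h₂ : Step a p (α, M) o₂) :
    o₁ = o₂ := by
  suffices H : ∀ (s o₁ o₂ : PE A L × MMap L), Step a p s o₁ → Step a p s o₂ → o₁ = o₂ from
    H _ _ _ h₁ h₂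
  intro s o₁ o₂ h₁
  induction h₁ generalizing o₂ with
  | eps M => intro h₂; cases h₂; rfl
  | bot M => intro h₂; cases h₂; rfl
  | ltr M =>
    intro h₂
    cases h₂ with
    | ltr => rfl
    | ltrFail _ _ hb => exact absurd rfl hb
  | ltrFail b M hb =>
    intro h₂
    cases h₂ with
    | ltr => exact absurd rfl hb
    | ltrFail => rfl
  | concat h h1 h2 ih =>
    intro h₂
    cases h₂ with
    | concat h' h1' h2' => injection ih _ h' with e1 e2; subst e1; subst e2; rfl
    | concatEps h' h2' => injection ih _ h' with e1 e2; subst e1; exact absurd h2' h2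
    | concatBot h' => injection ih _ h' with e1 e2; exact absurd e1 h1
  | concatEps h h2 ih =>
    intro h₂
    cases h₂ with
    | concat h' h1' h2' => injection ih _ h' with e1 e2; subst e1; exact absurd h2 h2'
    | concatEps h' h2' => injection ih _ h' with e1 e2; subst e2; rfl
    | concatBot h' => injection ih _ h' with e1 e2; subst e1; exact absurd h2 (by simp [PE.nullable])
  | concatBot h ih =>
    intro h₂
    cases h₂ with
    | concat h' h1' h2' => injection ih _ h' with e1 e2; exact absurd e1.symm h1'
    | concatEps h' h2' =>
      injection ih _ h' with e1 e2; rw [← e1] at h2'; exact absurd h2' (by simp [PE.nullable])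
    | concatBot h' => rfl
  | orEnd h₀ h₁ h ih₀ ih₁ =>
    intro h₂
    cases h₂ with
    | orEnd h₀' h₁' h' =>
      injection ih₀ _ h₀' with e1 e2; injection ih₁ _ h₁' with e3 e4
      subst e2; subst e4; rfl
    | or h₀' h₁' h' =>
      injection ih₀ _ h₀' with e1 e2; injection ih₁ _ h₁' with e3 e4
      subst e1; subst e3; rcases h with h | h
      · exact absurd h h'.1
      · exact absurd h h'.2
  | or h₀ h₁ h ih₀ ih₁ =>
    intro h₂
    cases h₂ with
    | orEnd h₀' h₁' h' =>
      injection ih₀ _ h₀' with e1 e2; injection ih₁ _ h₁' with e3 e4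
      subst e1; subst e3; rcases h' with h' | h'
      · exact absurd h' h.1
      · exact absurd h' h.2
    | or h₀' h₁' h' =>
      injection ih₀ _ h₀' with e1 e2; injection ih₁ _ h₁' with e3 e4
      subst e1; subst e2; subst e3; subst e4; rfl
  | iterEnd h hn ih =>
    intro h₂
    cases h₂ with
    | iterEnd h' hn' => injection ih _ h' with e1 e2; subst e2; rfl
    | iter hb' hn' h' => injection ih _ hb' with e1 e2; subst e1; exact absurd hn hn'
  | iter hb hn h ihb ih =>
    intro h₂
    cases h₂ with
    | iterEnd h' hn' => injection ihb _ h' with e1 e2; subst e1; exact absurd hn' hn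
    | iter hb' hn' h' => injection ih _ h' with e1 e2; subst e1; subst e2; rfl
  | labStart h hn ih =>
    intro h₂
    cases h₂ with
    | labStart h' hn' => injection ih _ h' with e1 e2; subst e1; subst e2; rfl
    | labLtr h' hn' => injection ih _ h' with e1 e2; subst e1; exact absurd hn' hn
  | labCont h hn ih =>
    intro h₂
    cases h₂ with
    | labCont h' hn' => injection ih _ h' with e1 e2; subst e1; subst e2; rfl
    | labEnd h' hn' => injection ih _ h' with e1 e2; subst e1; exact absurd hn' hn
  | labLtr h hn ih =>
    intro h₂
    cases h₂ with
    | labStart h' hn' => injection ih _ h' with e1 e2; subst e1; exact absurd hn hn'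
    | labLtr h' hn' => injection ih _ h' with e1 e2; subst e2; rfl
  | labEnd h hn ih =>
    intro h₂
    cases h₂ with
    | labCont h' hn' => injection ih _ h' with e1 e2; subst e1; exact absurd hn hn'
    | labEnd h' hn' => injection ih _ h' with e1 e2; subst e2; rfl
end

section
/- The one-step relation is total on non-trivial expressions: for every prefix expression α, m-map M, letter a, and position p, there exists at least one pair (α', M') with (α, M) →_{a,p} (α', M'). -/
open Classical

/-- the one-step relation is total: some rule always applies. -/
theorem step_total {A L : Type*} (a : A) (p : ℕ) (α : PE A L) (M : MMap L) :
    ∃ o : PE A L × MMap L, Step a p (α, M) o := by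
  induction α generalizing M with
  | eps => exact ⟨_, .eps M⟩
  | bot => exact ⟨_, .bot M⟩
  | ltr b =>
    by_cases hb : b = a
    · subst hb; exact ⟨_, .ltr M⟩
    · exact ⟨_, .ltrFail b M hb⟩
  | cat α β ihα ihβ =>
    obtain ⟨⟨α', M'⟩, h⟩ := ihα M
    by_cases hbot : α' = PE.bot
    · subst hbot; exact ⟨_, .concatBot h⟩
    · by_cases hn : α'.nullable
      · exact ⟨_, .concatEps h hn⟩
      · exact ⟨_, .concat h hbot hn⟩
  | or α₀ α₁ ih₀ ih₁ =>
    obtain ⟨⟨α₀', M₀'⟩, h₀⟩ := ih₀ M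
    obtain ⟨⟨α₁', M₁'⟩, h₁⟩ := ih₁ M
    by_cases hn : α₀'.nullable ∨ α₁'.nullable
    · exact ⟨_, .orEnd h₀ h₁ hn⟩
    · push_neg at hn; exact ⟨_, .or h₀ h₁ hn⟩
  | iter α β ihα ihβ =>
    obtain ⟨⟨β', Mb⟩, hb⟩ := ihβ M
    by_cases hn : β'.nullable
    · exact ⟨_, .iterEnd hb hn⟩
    · obtain ⟨⟨α', M'⟩, h⟩ := ihα M
      exact ⟨_, .iter hb hn h⟩
  | lab l α ih =>
    obtain ⟨⟨α', M'⟩, h⟩ := ih M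
    by_cases hn : α'.nullable
    · exact ⟨_, .labLtr h hn⟩
    · exact ⟨_, .labStart h hn⟩
  | labm l α ih =>
    obtain ⟨⟨α', M'⟩, h⟩ := ih M
    by_cases hn : α'.nullable
    · exact ⟨_, .labEnd h hn⟩
    · exact ⟨_, .labCont h hn⟩
end

section
/- For a fixed position p and a prefix expression α over a finite alphabet Σ, the set D_p(α) of all expressions reachable from α by finitely many applications of the one-step relation (over arbitrary letter sequences) is finite. -/
open Classical

/-- Auxiliary: a finite overapproximation of the reachable set. -/
noncomputable def Dset {A L : Type*} : PE A L → Set (PE A L)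
  | .eps => {.eps, .bot}
  | .bot => {.bot}
  | .ltr a => {.ltr a, .eps, .bot}
  | .cat α β => {.cat α β, .bot} ∪ (fun x => x.scat β) '' Dset α ∪ Dset β
  | .or α β => ({.eps, .bot} ∪ Dset α ∪ Dset β) ∪ Set.image2 PE.or (Dset α) (Dset β)
  | .iter α β => {.iter α β, .eps, .bot} ∪ (fun x => x.scat (.iter α β)) '' Dset α
  | .lab l α => {.lab l α, .eps, .bot} ∪ (PE.labm l) '' Dset α
  | .labm l α => {.eps, .bot} ∪ (PE.labm l) '' Dset α

lemma PE.scat_eps_right {A L : Type*} (x : PE A L) : x.scat .eps = x := by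
  unfold PE.scat
  split_ifs with h <;> simp_all

lemma mem_Dset_self {A L : Type*} : ∀ α : PE A L, α ∈ Dset α := by
  intro α
  induction α with
  | eps => simp [Dset]
  | bot => simp [Dset]
  | ltr a => simp [Dset]
  | cat α β ihα ihβ => simp [Dset]
  | or α β ihα ihβ =>
      right; exact Set.mem_image2_of_mem ihα ihβ
  | iter α β ihα ihβ => simp [Dset]
  | lab l α ih => simp [Dset]
  | labm l α ih =>
      right; exact ⟨α, ih, rfl⟩

lemma Dset_finite {A L : Type*} : ∀ α : PE A L, (Dset α).Finite := by
  intro α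
  induction α with
  | eps => exact (Set.finite_singleton _).insert _
  | bot => exact Set.finite_singleton _
  | ltr a => exact ((Set.finite_singleton _).insert _).insert _
  | cat α β ihα ihβ =>
      exact (((Set.finite_singleton _).insert _).union (ihα.image _)).union ihβ
  | or α β ihα ihβ =>
      exact ((((Set.finite_singleton _).insert _).union ihα).union ihβ).union
        (Set.Finite.image2 _ ihα ihβ)
  | iter α β ihα ihβ =>
      exact (((Set.finite_singleton _).insert _).insert _).union (ihα.image _)
  | lab l α ih =>
      exact (((Set.finite_singleton _).insert _).insert _).union (ih.image _)
  | labm l α ih =>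
      exact ((Set.finite_singleton _).insert _).union (ih.image _)

lemma Dset_closed {A L : Type*} (p : ℕ) :
    ∀ α : PE A L, ∀ x ∈ Dset α, ∀ y, StepE p x y → y ∈ Dset α := by
  intro α
  induction α with
  | eps =>
      rintro x hx y ⟨a, M, M', hs⟩
      rcases hx with hx | hx <;> subst hx <;> cases hs <;> simp [Dset]
  | bot =>
      rintro x hx y ⟨a, M, M', hs⟩
      rcases hx with hx
      subst hx; cases hs; simp [Dset]
  | ltr b =>
      rintro x hx y ⟨a, M, M', hs⟩
      rcases hx with hx | hx | hx <;> subst hx <;> cases hs <;> simp [Dset]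
  | cat α β ihα ihβ =>
      have key : ∀ u ∈ Dset α, ∀ y, StepE p (PE.cat u β) y → y ∈ Dset (PE.cat α β) := by
        rintro u hu y ⟨a, M, M', hs⟩
        cases hs with
        | concat h h1 h2 =>
            exact Or.inl (Or.inr ⟨_, ihα u hu _ ⟨_, _, _, h⟩, rfl⟩)
        | concatEps h h2 => exact Or.inr (mem_Dset_self β)
        | concatBot h => exact Or.inl (Or.inl (Or.inr rfl))
      rintro x hx y hy
      rcases hx with ((hx | hx) | ⟨z, hz, hx⟩) | hx
      · subst hx; exact key α (mem_Dset_self α) y hy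
      · subst hx
        obtain ⟨a, M, M', hs⟩ := hy
        cases hs; exact Or.inl (Or.inl (Or.inr rfl))
      · subst hx
        dsimp only at hy
        by_cases hze : z = PE.eps
        · subst hze
          simp only [PE.scat, if_pos rfl] at hy
          exact Or.inr (ihβ β (mem_Dset_self β) y hy)
        · by_cases hβe : β = PE.eps
          · subst hβe
            rw [PE.scat_eps_right] at hy
            have hyα : y ∈ Dset α := ihα z hz y hy
            exact Or.inl (Or.inr ⟨y, hyα, PE.scat_eps_right y⟩)
          · by_cases hzb : z = PE.bot
            · subst hzb
              simp only [PE.scat, if_neg hze, if_neg hβe, if_pos rfl] at hy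
              obtain ⟨a, M, M', hs⟩ := hy
              cases hs; exact Or.inl (Or.inl (Or.inr rfl))
            · simp only [PE.scat, if_neg hze, if_neg hβe, if_neg hzb] at hy
              exact key z hz y hy
      · exact Or.inr (ihβ x hx y hy)
  | or α β ihα ihβ =>
      rintro x hx y hy
      rcases hx with (((hx | hx) | hx) | hx) | ⟨u, hu, v, hv, hx⟩
      · subst hx
        obtain ⟨a, M, M', hs⟩ := hy
        cases hs; exact Or.inl (Or.inl (Or.inl (Or.inr rfl)))
      · subst hx
        obtain ⟨a, M, M', hs⟩ := hy
        cases hs; exact Or.inl (Or.inl (Or.inl (Or.inr rfl)))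
      · exact Or.inl (Or.inl (Or.inr (ihα x hx y hy)))
      · exact Or.inl (Or.inr (ihβ x hx y hy))
      · subst hx
        obtain ⟨a, M, M', hs⟩ := hy
        cases hs with
        | orEnd h₀ h₁ h => exact Or.inl (Or.inl (Or.inl (Or.inl rfl)))
        | or h₀ h₁ h =>
            rename_i α₀' α₁' M₀' M₁'
            have hu' : α₀' ∈ Dset α := ihα u hu _ ⟨_, _, _, h₀⟩
            have hv' : α₁' ∈ Dset β := ihβ v hv _ ⟨_, _, _, h₁⟩
            unfold PE.sor
            split_ifs with h1 h2
            · exact Or.inl (Or.inr hv')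
            · exact Or.inl (Or.inl (Or.inr hu'))
            · exact Or.inr (Set.mem_image2_of_mem hu' hv')
  | iter α β ihα ihβ =>
      have key : ∀ u ∈ Dset α, ∀ y, StepE p (PE.cat u (PE.iter α β)) y →
          y ∈ Dset (PE.iter α β) := by
        rintro u hu y ⟨a, M, M', hs⟩
        cases hs with
        | concat h h1 h2 =>
            exact Or.inr ⟨_, ihα u hu _ ⟨_, _, _, h⟩, rfl⟩
        | concatEps h h2 => exact Or.inl (Or.inl rfl)
        | concatBot h => exact Or.inl (Or.inr (Or.inr rfl))
      have scatmem : ∀ z ∈ Dset α, PE.scat z (PE.iter α β) ∈ Dset (PE.iter α β) := by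
        intro z hz; exact Or.inr ⟨z, hz, rfl⟩
      rintro x hx y hy
      rcases hx with (hx | hx | hx) | ⟨z, hz, hx⟩
      · subst hx
        obtain ⟨a, M, M', hs⟩ := hy
        cases hs with
        | iterEnd h hn => exact Or.inl (Or.inr (Or.inl rfl))
        | iter hb hn h =>
            exact scatmem _ (ihα α (mem_Dset_self α) _ ⟨_, _, _, h⟩)
      · subst hx
        obtain ⟨a, M, M', hs⟩ := hy
        cases hs; exact Or.inl (Or.inr (Or.inr rfl))
      · subst hx
        obtain ⟨a, M, M', hs⟩ := hy
        cases hs; exact Or.inl (Or.inr (Or.inr rfl))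
      · subst hx
        dsimp only at hy
        by_cases hze : z = PE.eps
        · subst hze
          simp only [PE.scat, if_pos rfl] at hy
          obtain ⟨a, M, M', hs⟩ := hy
          cases hs with
          | iterEnd h hn => exact Or.inl (Or.inr (Or.inl rfl))
          | iter hb hn h =>
              exact scatmem _ (ihα α (mem_Dset_self α) _ ⟨_, _, _, h⟩)
        · have hIe : (PE.iter α β : PE A L) ≠ PE.eps := by intro h; cases h
          by_cases hzb : z = PE.bot
          · subst hzb
            simp only [PE.scat, if_neg hze, if_neg hIe, if_pos rfl] at hy
            obtain ⟨a, M, M', hs⟩ := hy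
            cases hs; exact Or.inl (Or.inr (Or.inr rfl))
          · simp only [PE.scat, if_neg hze, if_neg hIe, if_neg hzb] at hy
            exact key z hz y hy
  | lab l α ih =>
      rintro x hx y hy
      rcases hx with (hx | hx | hx) | ⟨z, hz, hx⟩
      · subst hx
        obtain ⟨a, M, M', hs⟩ := hy
        cases hs with
        | labStart h hn => exact Or.inr ⟨_, ih α (mem_Dset_self α) _ ⟨_, _, _, h⟩, rfl⟩
        | labLtr h hn => exact Or.inl (Or.inr (Or.inl rfl))
      · subst hx
        obtain ⟨a, M, M', hs⟩ := hy
        cases hs; exact Or.inl (Or.inr (Or.inr rfl))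
      · subst hx
        obtain ⟨a, M, M', hs⟩ := hy
        cases hs; exact Or.inl (Or.inr (Or.inr rfl))
      · subst hx
        obtain ⟨a, M, M', hs⟩ := hy
        cases hs with
        | labCont h hn => exact Or.inr ⟨_, ih z hz _ ⟨_, _, _, h⟩, rfl⟩
        | labEnd h hn => exact Or.inl (Or.inr (Or.inl rfl))
  | labm l α ih =>
      rintro x hx y hy
      rcases hx with (hx | hx) | ⟨z, hz, hx⟩
      · subst hx
        obtain ⟨a, M, M', hs⟩ := hy
        cases hs; exact Or.inl (Or.inr rfl)
      · subst hx
        obtain ⟨a, M, M', hs⟩ := hy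
        cases hs; exact Or.inl (Or.inr rfl)
      · subst hx
        obtain ⟨a, M, M', hs⟩ := hy
        cases hs with
        | labCont h hn => exact Or.inr ⟨_, ih z hz _ ⟨_, _, _, h⟩, rfl⟩
        | labEnd h hn => exact Or.inl (Or.inl rfl)

/-- for a fixed position `p` and a PE `α` over a finite alphabet,
the set `D_p(α)` of reachable expressions is finite. -/
theorem reachable_finite {A L : Type*} [Finite A] (p : ℕ) (α : PE A L) :
    {α' : PE A L | Reach p α α'}.Finite := by
  apply (Dset_finite α).subset
  intro x hx
  induction hx with
  | refl => exact mem_Dset_self α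
  | tail _ hstep ih => exact Dset_closed p α _ ih _ hstep
end

section
/- The language of words matched by a prefix expression is prefix-free: if δ(α, u) = (ε, m₁) and δ(α, v) = (ε, m₂) with u ≤ v (u a prefix of v), then u = v. -/
open Classical

theorem Step.deterministic {A L : Type*} {a : A} {p : ℕ} {s r r' : PE A L × MMap L}
    (h : Step a p s r) (h' : Step a p s r') : r = r' := by
  induction h generalizing r' with
  | eps M => cases h'; rfl
  | bot M => cases h'; rfl
  | ltr M => cases h' with
    | ltr => rfl
    | ltrFail _ _ hb => exact absurd rfl hb
  | ltrFail b M hb => cases h' with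
    | ltr => exact absurd rfl hb
    | ltrFail => rfl
  | concat h h1 h2 ih =>
    cases h' with
    | concat h' h1' h2' => obtain ⟨rfl, rfl⟩ := Prod.mk.injEq .. ▸ ih h'; rfl
    | concatEps h' h2' =>
      obtain ⟨rfl, rfl⟩ := Prod.mk.injEq .. ▸ ih h'; exact absurd h2' h2
    | concatBot h' =>
      obtain ⟨rfl, rfl⟩ := Prod.mk.injEq .. ▸ ih h'; exact absurd rfl h1
  | concatEps h h2 ih =>
    cases h' with
    | concat h' h1' h2' =>
      obtain ⟨rfl, rfl⟩ := Prod.mk.injEq .. ▸ ih h'; exact absurd h2 h2'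
    | concatEps h' h2' => obtain ⟨rfl, rfl⟩ := Prod.mk.injEq .. ▸ ih h'; rfl
    | concatBot h' =>
      obtain ⟨rfl, rfl⟩ := Prod.mk.injEq .. ▸ ih h'
      simp [PE.nullable] at h2
  | concatBot h ih =>
    cases h' with
    | concat h' h1' h2' =>
      obtain ⟨rfl, rfl⟩ := Prod.mk.injEq .. ▸ (ih h').symm; exact absurd rfl h1'
    | concatEps h' h2' =>
      obtain ⟨rfl, rfl⟩ := Prod.mk.injEq .. ▸ (ih h').symm
      simp [PE.nullable] at h2'
    | concatBot h' => rfl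
  | orEnd h₀ h₁ hn ih₀ ih₁ =>
    cases h' with
    | orEnd h₀' h₁' hn' =>
      obtain ⟨rfl, rfl⟩ := Prod.mk.injEq .. ▸ ih₀ h₀'
      obtain ⟨rfl, rfl⟩ := Prod.mk.injEq .. ▸ ih₁ h₁'; rfl
    | or h₀' h₁' hn' =>
      obtain ⟨rfl, rfl⟩ := Prod.mk.injEq .. ▸ ih₀ h₀'
      obtain ⟨rfl, rfl⟩ := Prod.mk.injEq .. ▸ ih₁ h₁'
      rcases hn with h | h
      · exact absurd h hn'.1
      · exact absurd h hn'.2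
  | or h₀ h₁ hn ih₀ ih₁ =>
    cases h' with
    | orEnd h₀' h₁' hn' =>
      obtain ⟨rfl, rfl⟩ := Prod.mk.injEq .. ▸ ih₀ h₀'
      obtain ⟨rfl, rfl⟩ := Prod.mk.injEq .. ▸ ih₁ h₁'
      rcases hn' with h | h
      · exact absurd h hn.1
      · exact absurd h hn.2
    | or h₀' h₁' hn' =>
      obtain ⟨rfl, rfl⟩ := Prod.mk.injEq .. ▸ ih₀ h₀'
      obtain ⟨rfl, rfl⟩ := Prod.mk.injEq .. ▸ ih₁ h₁'; rfl
  | iterEnd h hn ih =>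
    cases h' with
    | iterEnd h' hn' => obtain ⟨rfl, rfl⟩ := Prod.mk.injEq .. ▸ ih h'; rfl
    | iter hb' hn' h' =>
      obtain ⟨rfl, rfl⟩ := Prod.mk.injEq .. ▸ ih hb'; exact absurd hn hn'
  | iter hb hn h ihb ih =>
    cases h' with
    | iterEnd h' hn' =>
      obtain ⟨rfl, rfl⟩ := Prod.mk.injEq .. ▸ ihb h'; exact absurd hn' hn
    | iter hb' hn' h' => obtain ⟨rfl, rfl⟩ := Prod.mk.injEq .. ▸ ih h'; rfl
  | labStart h hn ih =>
    cases h' with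
    | labStart h' hn' => obtain ⟨rfl, rfl⟩ := Prod.mk.injEq .. ▸ ih h'; rfl
    | labLtr h' hn' =>
      obtain ⟨rfl, rfl⟩ := Prod.mk.injEq .. ▸ ih h'; exact absurd hn' hn
  | labCont h hn ih =>
    cases h' with
    | labCont h' hn' => obtain ⟨rfl, rfl⟩ := Prod.mk.injEq .. ▸ ih h'; rfl
    | labEnd h' hn' =>
      obtain ⟨rfl, rfl⟩ := Prod.mk.injEq .. ▸ ih h'; exact absurd hn' hn
  | labLtr h hn ih =>
    cases h' with
    | labStart h' hn' =>
      obtain ⟨rfl, rfl⟩ := Prod.mk.injEq .. ▸ ih h'; exact absurd hn hn'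
    | labLtr h' hn' => obtain ⟨rfl, rfl⟩ := Prod.mk.injEq .. ▸ ih h'; rfl
  | labEnd h hn ih =>
    cases h' with
    | labCont h' hn' =>
      obtain ⟨rfl, rfl⟩ := Prod.mk.injEq .. ▸ ih h'; exact absurd hn hn'
    | labEnd h' hn' => obtain ⟨rfl, rfl⟩ := Prod.mk.injEq .. ▸ ih h'; rfl

theorem Evalbar.deterministic {A L : Type*} {α : PE A L} {w : List A} {p : ℕ}
    {M : MMap L} {r r' : PE A L × MMap L}
    (h : Evalbar α w p M r) (h' : Evalbar α w p M r') : r = r' := by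
  induction h generalizing r' with
  | nil => cases h'; rfl
  | cons hs ht ih =>
    cases h' with
    | cons hs' ht' =>
      obtain ⟨rfl, rfl⟩ := Prod.mk.injEq .. ▸ hs.deterministic hs'
      exact ih ht'

theorem Evalbar.append {A L : Type*} {α : PE A L} {u w : List A} {p : ℕ}
    {M : MMap L} {r : PE A L × MMap L}
    (h : Evalbar α (u ++ w) p M r) :
    ∃ mid, Evalbar α u p M mid ∧ Evalbar mid.1 w (p + u.length) mid.2 r := by
  induction u generalizing α p M with
  | nil => exact ⟨(α, M), .nil .., by simpa using h⟩
  | cons a u ih =>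
    cases h with
    | cons hs ht =>
      obtain ⟨mid, h1, h2⟩ := ih ht
      refine ⟨mid, .cons hs h1, ?_⟩
      simpa [Nat.add_comm, Nat.add_assoc, Nat.add_left_comm] using h2

theorem Evalbar.bot_absorbing {A L : Type*} {w : List A} {p : ℕ}
    {M : MMap L} {e : PE A L} {m : MMap L}
    (h : Evalbar (.bot) w p M (e, m)) : e = .bot := by
  induction w generalizing p M with
  | nil => cases h; rfl
  | cons a w ih =>
    cases h with
    | cons hs ht => cases hs; exact ih ht

/-- the language matched by a prefix expression is prefix-free. -/
theorem matched_prefix_free {A L : Type*} (α : PE A L) (u v : List A)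
    (m₁ m₂ : MMap L) (huv : u <+: v)
    (h₁ : Evalbar α u 0 mEmpty (.eps, m₁)) (h₂ : Evalbar α v 0 mEmpty (.eps, m₂)) :
    u = v := by
  obtain ⟨w, rfl⟩ := huv
  obtain ⟨mid, hmid, hrest⟩ := h₂.append
  obtain rfl : mid = (PE.eps, m₁) := hmid.deterministic h₁
  cases w with
  | nil => simp
  | cons a w =>
    cases hrest with
    | cons hs ht =>
      cases hs
      exact absurd ht.bot_absorbing (by simp)
end
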